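/- If an improvement relation R relates states s and q of two deterministic transition systems, then s is terminating if and only if q is terminating, and the evaluation length satisfies |s| ≥ |q|. -/

import Mathlib

/-- `n`-step iteration of a transition relation. -/
inductive StepN {S : Type*} (R : S → S → Prop) : ℕ → S → S → Prop where
  | refl (s : S) : StepN R 0 s s
  | step {n : ℕ} {s u v : S} : R s u → StepN R n u v → StepN R (n+1) s v


/-- Steps of a deterministic transition system given by a partial successor map. -/
def OStepN {S : Type*} (f : S → Option S) : ℕ → S → S → Prop :=
  StepN (fun a b => f a = some b)

/-- A state is terminating if it reaches a final state (one with no successor). -/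
def Terminates {S : Type*} (f : S → Option S) (s : S) : Prop :=
  ∃ n s', OStepN f n s s' ∧ f s' = none


/-!
Condition (3) lets `q` take one step at the price of strictly more steps of `s`, and since the
systems are deterministic those steps are a prefix of any terminating run of `s`. Strong induction
on the length of that run therefore gives `q` a terminating run that is no longer; as terminating
runs are unique, this is `|q| ≤ |s|`. Conversely, strong induction on a terminating run of `q`,
using (3) until `q` is final and then (1), shows that `s` terminates.
-/

namespace OStepN

variable {S : Type*} {f : S → Option S}

theorem cons {n : ℕ} {a b c : S} (h : f a = some b) (hbc : OStepN f n b c) :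
    OStepN f (n + 1) a c :=
  StepN.step (R := fun a b => f a = some b) h hbc

theorem single {a b : S} (h : f a = some b) : OStepN f 1 a b :=
  cons h (StepN.refl b)

theorem trans {n m : ℕ} {a b c : S} (hab : OStepN f n a b) (hbc : OStepN f m b c) :
    OStepN f (n + m) a c := by
  induction hab with
  | refl => simpa using hbc
  | step hs _ ih => simpa only [Nat.add_right_comm] using cons hs (ih hbc)

theorem exists_add_of_final {m n : ℕ} {s a b : S} (hb : OStepN f m s b) (ha : OStepN f n s a)
    (hfin : f a = none) : ∃ k, n = m + k ∧ OStepN f k b a := by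
  induction hb generalizing n with
  | refl => exact ⟨n, (Nat.zero_add n).symm, ha⟩
  | step hsu _ ih =>
    cases ha with
    | refl => simp [hfin] at hsu
    | step hsu' hrest =>
      cases hsu.symm.trans hsu'
      obtain ⟨k, rfl, hk⟩ := ih hrest
      exact ⟨k, by omega, hk⟩

end OStepN

section Improvement

variable {S Q : Type*} {f : S → Option S} {g : Q → Option Q} {Rel : S → Q → Prop}

theorem exists_final_le_of_rel_final
    (h3 : ∀ s q q', Rel s q → g q = some q' →
      ∃ s' q'' n m, OStepN f m s s' ∧ OStepN g n q' q'' ∧ Rel s' q'' ∧ n + 1 ≤ m)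
    (n : ℕ) {s : S} {q : Q} {s' : S} (hsq : Rel s q) (hs : OStepN f n s s')
    (hfin : f s' = none) : ∃ m q', m ≤ n ∧ OStepN g m q q' ∧ g q' = none := by
  induction n using Nat.strong_induction_on generalizing s q with
  | _ n ih =>
    cases hq : g q with
    | none => exact ⟨0, q, Nat.zero_le n, StepN.refl q, hq⟩
    | some q₁ =>
      obtain ⟨s₁, q₂, k, l, hs₁, hq₂, hrel, hkl⟩ := h3 s q q₁ hsq hq
      obtain ⟨r, rfl, hr⟩ := hs₁.exists_add_of_final hs hfin
      obtain ⟨j, q', hjr, hq', hq'fin⟩ := ih r (by omega) hrel hr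
      exact ⟨1 + k + j, q', by omega, ((OStepN.single hq).trans hq₂).trans hq', hq'fin⟩

theorem terminates_of_rel_final
    (h1 : ∀ s q, Rel s q → g q = none → ∃ n s', OStepN f n s s' ∧ f s' = none)
    (h3 : ∀ s q q', Rel s q → g q = some q' →
      ∃ s' q'' n m, OStepN f m s s' ∧ OStepN g n q' q'' ∧ Rel s' q'' ∧ n + 1 ≤ m)
    (m : ℕ) {s : S} {q q' : Q} (hsq : Rel s q) (hq : OStepN g m q q')
    (hfin : g q' = none) : Terminates f s := by
  induction m using Nat.strong_induction_on generalizing s q with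
  | _ m ih =>
    cases hstep : g q with
    | none => exact h1 s q hsq hstep
    | some q₁ =>
      obtain ⟨s₁, q₂, k, l, hs₁, hq₂, hrel, -⟩ := h3 s q q₁ hsq hstep
      obtain ⟨r, rfl, hr⟩ := (OStepN.single hstep).exists_add_of_final hq hfin
      obtain ⟨j, rfl, hj⟩ := hq₂.exists_add_of_final hr hfin
      obtain ⟨i, s', hs', hs'fin⟩ := ih j (by omega) hrel hj
      exact ⟨l + i, s', hs₁.trans hs', hs'fin⟩

end Improvement

theorem improvement_termination_and_length_general {S Q : Type*}
    (f : S → Option S) (g : Q → Option Q) (Rel : S → Q → Prop)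
    (h1 : ∀ s q, Rel s q → g q = none → ∃ n s', OStepN f n s s' ∧ f s' = none)
    (h3 : ∀ s q q', Rel s q → g q = some q' →
      ∃ s' q'' n m, OStepN f m s s' ∧ OStepN g n q' q'' ∧ Rel s' q'' ∧ n + 1 ≤ m)
    {s : S} {q : Q} (hsq : Rel s q) :
    (Terminates f s ↔ Terminates g q) ∧
    (∀ n m s' q', OStepN f n s s' → f s' = none → OStepN g m q q' → g q' = none →
      m ≤ n) := by
  refine ⟨⟨?_, ?_⟩, ?_⟩
  · rintro ⟨n, s', hs, hfin⟩
    obtain ⟨m, q', -, hq, hq'fin⟩ := exists_final_le_of_rel_final h3 n hsq hs hfin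
    exact ⟨m, q', hq, hq'fin⟩
  · rintro ⟨m, q', hq, hfin⟩
    exact terminates_of_rel_final h1 h3 m hsq hq hfin
  · intro n m s' q' hs hsfin hq hqfin
    obtain ⟨m', q'', hm'n, hq'', hq''fin⟩ := exists_final_le_of_rel_final h3 n hsq hs hsfin
    obtain ⟨k, rfl, -⟩ := hq.exists_add_of_final hq'' hq''fin
    omega

/-- if an improvement relation `Rel` relates states `s` and `q` of two
deterministic transition systems, then `s` terminates iff `q` terminates, and the
evaluation lengths satisfy `|s| ≥ |q|`. -/
theorem improvement_termination_and_length {S Q : Type*}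
    (f : S → Option S) (g : Q → Option Q) (Rel : S → Q → Prop)
    (h1 : ∀ s q, Rel s q → g q = none → ∃ n s', OStepN f n s s' ∧ f s' = none)
    (h2 : ∀ s q s', Rel s q → f s = some s' →
      ∃ s'' q' n m, OStepN f m s' s'' ∧ OStepN g n q q' ∧ Rel s'' q' ∧ n ≤ m + 1)
    (h3 : ∀ s q q', Rel s q → g q = some q' →
      ∃ s' q'' n m, OStepN f m s s' ∧ OStepN g n q' q'' ∧ Rel s' q'' ∧ n + 1 ≤ m)
    {s : S} {q : Q} (hsq : Rel s q) :
    (Terminates f s ↔ Terminates g q) ∧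
    (∀ n m s' q', OStepN f n s s' → f s' = none → OStepN g m q q' → g q' = none →
      m ≤ n) :=
  improvement_termination_and_length_general f g Rel h1 h3 hsq
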